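/- arXiv:1804.02999 — 6 statements merged into one kernel-verified Lean document; each statement's English description precedes it below -/
import Mathlib

section
/- Let $G_1,\dots,G_n$ be perfect groups, let $S$ be a subgroup of $G_1\times\dots\times G_n$ whose projection to each factor $G_i$ is surjective, and let $N$ be a normal subgroup of $S$ such that the quotient $S/N$ is solvable. Then $\gamma_n(S)\leq N$; in particular $S/N$ is nilpotent of class at most $n-1$. -/
/-!
Let `Kᵢ ≤ S` be the kernel of the `i`-th coordinate projection and `π : S → S/N` the quotient
map. Since `S/Kᵢ ≅ Gᵢ` is perfect and `S/N` is solvable, the solvable quotient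
`(S/N)/π(Kᵢ)` of `Gᵢ` is trivial, i.e. `π(Kᵢ) = S/N` for every `i`. Hence
`γₙ(S/N) = [π(K₁), …, π(Kₙ)] = π([K₁, …, Kₙ])`, and the iterated commutator of the normal
subgroups `Kᵢ` lies in `⋂ᵢ Kᵢ = 1`.
-/

section

variable {Γ Q : Type*} [Group Γ] [Group Q]

theorem Subgroup.lowerCentralSeries_le_map_iInf (f : Γ →* Q) :
    ∀ {m : ℕ} (K : Fin (m + 1) → Subgroup Γ) [∀ i, (K i).Normal],
      (∀ i, (K i).map f = ⊤) → (⊤ : Subgroup Q).lowerCentralSeries m ≤ (⨅ i, K i).map f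
  | 0, K, _, hK => by
    rw [lowerCentralSeries_zero, ← hK 0]
    exact map_mono (le_iInf fun i => by rw [Fin.fin_one_eq_zero i])
  | m + 1, K, _, hK => by
    have hinit := lowerCentralSeries_le_map_iInf f (fun i => K i.castSucc) fun i => hK _
    have hcomm : ⁅⨅ i : Fin (m + 1), K i.castSucc, K (Fin.last _)⁆ ≤ ⨅ i, K i :=
      le_iInf <| Fin.lastCases (commutator_le_right _ _) fun j =>
        (commutator_mono (iInf_le _ j) le_rfl).trans (commutator_le_left _ _)
    calc (⊤ : Subgroup Q).lowerCentralSeries (m + 1)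
        = ⁅(⊤ : Subgroup Q).lowerCentralSeries m, (K (Fin.last _)).map f⁆ := by
          rw [lowerCentralSeries_succ, hK]
      _ ≤ ⁅(⨅ i : Fin (m + 1), K i.castSucc).map f, (K (Fin.last _)).map f⁆ :=
          commutator_mono hinit le_rfl
      _ ≤ (⨅ i, K i).map f := by
          rw [← map_commutator]
          exact map_mono hcomm

theorem Subgroup.map_ker_eq_top_of_isPerfect_of_isSolvable {P : Type*} [Group P]
    [Group.IsPerfect P] [Group.IsSolvable Q] {g : Γ →* P} (hg : Function.Surjective g)
    {f : Γ →* Q} (hf : Function.Surjective f) : g.ker.map f = ⊤ := by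
  have : (g.ker.map f).Normal := (inferInstance : g.ker.Normal).map f hf
  let φ : P →* Q ⧸ g.ker.map f := g.liftOfSurjective hg
    ⟨(QuotientGroup.mk' _).comp f, fun x hx => by
      simpa using (QuotientGroup.eq_one_iff (f x)).mpr (mem_map_of_mem f hx)⟩
  have hφ : Function.Surjective φ := by
    intro y
    obtain ⟨x, rfl⟩ := ((QuotientGroup.mk'_surjective _).comp hf) y
    exact ⟨g x, g.liftOfRightInverse_comp_apply _ _ _ x⟩
  have : Group.IsPerfect (Q ⧸ g.ker.map f) := Group.IsPerfect.ofSurjective hφ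
  rw [← QuotientGroup.subsingleton_iff, ← not_nontrivial_iff_subsingleton]
  intro
  exact Group.IsPerfect.not_isSolvable (Q ⧸ g.ker.map f) inferInstance

end

theorem Subgroup.iInf_ker_eval_eq_bot {ι : Type*} {G : ι → Type*} [∀ i, Group (G i)]
    (S : Subgroup (∀ i, G i)) : ⨅ i, ((Pi.evalMonoidHom G i).comp S.subtype).ker = ⊥ :=
  eq_bot_iff.mpr fun s hs => by
    rw [mem_iInf] at hs
    exact mem_bot.mpr <| Subtype.ext <| funext fun i => hs i

/-- **Corollary 1.** Let `S` be a subdirect subgroup of a product of perfect groups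
`G₁ × ⋯ × Gₙ` and `N` a normal subgroup of `S` with `S/N` solvable. Then
`γₙ(S) ≤ N` (here `γₖ(S)` is `lowerCentralSeries S (k-1)`), so `S/N` is nilpotent
of class at most `n - 1`. -/
theorem gamma_le_of_subdirect_perfect_solvable_quotient
    {n : ℕ} (hn : 0 < n) (G : Fin n → Type*) [∀ i, Group (G i)]
    (hperf : ∀ i, ⁅(⊤ : Subgroup (G i)), (⊤ : Subgroup (G i))⁆ = ⊤)
    (S : Subgroup (∀ i, G i)) (N : Subgroup ↥S) [N.Normal]
    (hS : ∀ i : Fin n, Function.Surjective (fun s : ↥S => (s : ∀ j, G j) i))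
    (hsolv : IsSolvable (↥S ⧸ N)) :
    (⊤ : Subgroup ↥S).lowerCentralSeries (n - 1) ≤ N := by
  obtain ⟨m, rfl⟩ := Nat.exists_eq_add_one_of_ne_zero hn.ne'
  have : Group.IsSolvable (↥S ⧸ N) := hsolv
  let coord (i : Fin (m + 1)) : ↥S →* G i := (Pi.evalMonoidHom G i).comp S.subtype
  have hquot (i : Fin (m + 1)) : (coord i).ker.map (QuotientGroup.mk' N) = ⊤ :=
    have : Group.IsPerfect (G i) := Group.isPerfect_def.mpr (hperf i)
    Subgroup.map_ker_eq_top_of_isPerfect_of_isSolvable (hS i) (QuotientGroup.mk'_surjective N)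
  have hbot : ((⊤ : Subgroup ↥S).lowerCentralSeries m).map (QuotientGroup.mk' N) = ⊥ := by
    rw [Subgroup.map_lowerCentralSeries,
      Subgroup.map_top_of_surjective _ (QuotientGroup.mk'_surjective N), ← le_bot_iff,
      ← Subgroup.map_bot (QuotientGroup.mk' N), ← Subgroup.iInf_ker_eval_eq_bot S]
    exact Subgroup.lowerCentralSeries_le_map_iInf _ _ hquot
  rwa [Nat.add_sub_cancel, ← QuotientGroup.ker_mk' N, ← Subgroup.map_eq_bot_iff]
end

section
/- Let $G$ be a group and $N$ a normal subgroup of $G$. Then for every $m\geq 0$ and every $l\geq 1$, the commutator subgroup $[[G,{}^mN],\gamma_l(N)]$ is contained in $[G,{}^{m+l}N]$. -/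
/-!
Induction on `l`. Writing `γ_{l+1}(N) = [γ_l(N), N]`, the three subgroups lemma modulo the normal
subgroup `[G, ᵐ⁺ˡ⁺¹N]` reduces `[[γ_l(N), N], [G, ᵐN]]` to `[[N, [G, ᵐN]], γ_l(N)] = [[G, ᵐ⁺¹N], γ_l(N)]`
and `[[[G, ᵐN], γ_l(N)], N]`, both of which are handled by the induction hypothesis (for `m + 1`
and for `m` respectively).
-/

/-- The left-normed iterated commutator subgroup `[G, ᵐN]`:
`[G, ⁰N] = G` (i.e. `⊤`) and `[G, ᵐ⁺¹N] = [[G, ᵐN], N]`. -/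
def iterComm {G : Type*} [Group G] (N : Subgroup G) : ℕ → Subgroup G
  | 0 => ⊤
  | m + 1 => ⁅iterComm N m, N⁆

/-- The lower central series of a (normal) subgroup `N`, as subgroups of the ambient
group: `γ₁(N) = N` is `gammaN N 0`, and `γ_{l+1}(N) = [γ_l(N), N]` is `gammaN N l`. -/
def gammaN {G : Type*} [Group G] (N : Subgroup G) : ℕ → Subgroup G
  | 0 => N
  | l + 1 => ⁅gammaN N l, N⁆

namespace Subgroup

variable {G : Type*} [Group G]

theorem commutator_commutator_le_of_rotate {K H₁ H₂ H₃ : Subgroup G} [K.Normal]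
    (h1 : ⁅⁅H₂, H₃⁆, H₁⁆ ≤ K) (h2 : ⁅⁅H₃, H₁⁆, H₂⁆ ≤ K) : ⁅⁅H₁, H₂⁆, H₃⁆ ≤ K := by
  have mod_K : ∀ A B C : Subgroup G, ⁅⁅A, B⁆, C⁆ ≤ K ↔
      ⁅⁅A.map (QuotientGroup.mk' K), B.map (QuotientGroup.mk' K)⁆,
        C.map (QuotientGroup.mk' K)⁆ = ⊥ := by
    intro A B C
    rw [← map_commutator, ← map_commutator, map_eq_bot_iff, QuotientGroup.ker_mk']
  rw [mod_K] at h1 h2 ⊢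
  exact commutator_commutator_eq_bot_of_rotate h1 h2

end Subgroup

section IterComm

variable {G : Type*} [Group G] (N : Subgroup G) [N.Normal]

instance iterComm_normal (m : ℕ) : (iterComm N m).Normal := by
  induction m with
  | zero => exact inferInstanceAs (⊤ : Subgroup G).Normal
  | succ m _ => exact Subgroup.commutator_normal _ _

theorem commutator_iterComm_gammaN_le_iterComm_add_succ (m k : ℕ) :
    ⁅iterComm N m, gammaN N k⁆ ≤ iterComm N (m + k + 1) := by
  induction k generalizing m with
  | zero => rfl
  | succ k ih =>
    rw [gammaN, Subgroup.commutator_comm]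
    apply Subgroup.commutator_commutator_le_of_rotate
    · rw [Subgroup.commutator_comm N]
      exact (ih (m + 1)).trans_eq (congrArg _ (by omega))
    · exact Subgroup.commutator_mono (ih m) le_rfl

end IterComm

/-- **[C2].** For a normal subgroup `N` of `G`, all `m ≥ 0` and `l ≥ 1`:
`[[G, ᵐN], γ_l(N)] ≤ [G, ᵐ⁺ˡN]`. -/
theorem commutator_iterComm_gammaN_le
    {G : Type*} [Group G] (N : Subgroup G) [N.Normal] (m l : ℕ) (hl : 1 ≤ l) :
    ⁅iterComm N m, gammaN N (l - 1)⁆ ≤ iterComm N (m + l) := by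
  obtain ⟨k, rfl⟩ := Nat.exists_eq_add_of_le' hl
  simpa [Nat.add_assoc] using commutator_iterComm_gammaN_le_iterComm_add_succ N m k
end

section
/- Let $G$ be a group, $d\in\mathbb{N}$, and let $K,L$ be normal subgroups of $G$. Then for all subsets $A,B\subseteq\{1,\dots,d\}$, the commutator of the subgroups $\Delta_A(K)$ and $\Delta_B(L)$ of $G^{\mathcal{P}([d])}$ equals $\Delta_{A\cup B}([K,L])$. -/
/-- The homomorphism `Δ_A : G → G^(𝒫[d])`, where `Δ_A(u)(B) = u` if `A ⊆ B` and `1`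
otherwise. Coordinates of the direct power are indexed by `Finset (Fin d)`. -/
def Delta {G : Type*} [Group G] (d : ℕ) (A : Finset (Fin d)) :
    G →* (Finset (Fin d) → G) where
  toFun u := fun B => if A ⊆ B then u else 1
  map_one' := by funext B; simp
  map_mul' u v := by
    funext B
    by_cases h : A ⊆ B <;> simp [Pi.mul_apply, h]

open scoped commutatorElement

theorem Subgroup.commutator_map_eq_map_commutator {G H : Type*} [Group G] [Group H]
    {f g h : G →* H} (hfg : ∀ u v, ⁅f u, g v⁆ = h ⁅u, v⁆) (K L : Subgroup G) :
    ⁅K.map f, L.map g⁆ = ⁅K, L⁆.map h := by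
  apply le_antisymm
  · rw [Subgroup.commutator_le]
    rintro _ ⟨u, hu, rfl⟩ _ ⟨v, hv, rfl⟩
    rw [hfg]
    exact Subgroup.mem_map_of_mem h (Subgroup.commutator_mem_commutator hu hv)
  · rw [Subgroup.map_commutator, Subgroup.commutator_le]
    rintro _ ⟨u, hu, rfl⟩ _ ⟨v, hv, rfl⟩
    rw [← map_commutatorElement, ← hfg]
    exact Subgroup.commutator_mem_commutator
      (Subgroup.mem_map_of_mem f hu) (Subgroup.mem_map_of_mem g hv)

theorem Delta_commutatorElement {G : Type*} [Group G] {d : ℕ} (A B : Finset (Fin d)) (u v : G) :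
    ⁅Delta d A u, Delta d B v⁆ = Delta d (A ∪ B) ⁅u, v⁆ := by
  funext C
  simp only [commutatorElement_def, Delta, MonoidHom.coe_mk, OneHom.coe_mk,
    Finset.union_subset_iff]
  by_cases hA : A ⊆ C <;> by_cases hB : B ⊆ C <;> simp [hA, hB]

theorem commutator_Delta_eq_general
    {G : Type*} [Group G] {d : ℕ} (K L : Subgroup G)
    (A B : Finset (Fin d)) :
    ⁅K.map (Delta d A), L.map (Delta d B)⁆ = ⁅K, L⁆.map (Delta d (A ∪ B)) :=
  Subgroup.commutator_map_eq_map_commutator (Delta_commutatorElement A B) K L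

/-- **Lemma (DC).** For normal subgroups `K, L ⊴ G` and `A, B ⊆ [d]`:
`[Δ_A(K), Δ_B(L)] = Δ_{A ∪ B}([K, L])`. -/
theorem commutator_Delta_eq
    {G : Type*} [Group G] {d : ℕ} (hd : 0 < d) (K L : Subgroup G)
    [K.Normal] [L.Normal] (A B : Finset (Fin d)) :
    ⁅K.map (Delta d A), L.map (Delta d B)⁆ = ⁅K, L⁆.map (Delta d (A ∪ B)) :=
  commutator_Delta_eq_general K L A B
end

section
/- Let $G$ be a group, $N$ a normal subgroup of $G$, $d\in\mathbb{N}$, and $A,B\subseteq\{1,\dots,d\}$ with $B$ nonempty. Then $[[G,{}^{|A|}N],\gamma_{|B|}(N)]\leq[G,{}^{|A\cup B|}N]$. -/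
/-! Hall's three subgroups lemma, read modulo the normal subgroup `[G, ^{a+l+1}N]`, gives by
induction on `l` that `[[G, ᵃN], γ_{l+1}(N)] ≤ [G, ^{a+l+1}N]`. As `|A ∪ B| ≤ |A| + |B|` and the
series `m ↦ [G, ᵐN]` is decreasing, the theorem follows. -/

theorem Subgroup.commutator_commutator_le_of_rotate_s5 {G : Type*} [Group G]
    {H₁ H₂ H₃ K : Subgroup G} [K.Normal]
    (h1 : ⁅⁅H₂, H₃⁆, H₁⁆ ≤ K) (h2 : ⁅⁅H₃, H₁⁆, H₂⁆ ≤ K) : ⁅⁅H₁, H₂⁆, H₃⁆ ≤ K := by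
  simp only [← QuotientGroup.ker_mk' K, ← Subgroup.map_eq_bot_iff,
    Subgroup.map_commutator] at h1 h2 ⊢
  exact Subgroup.commutator_commutator_eq_bot_of_rotate h1 h2

section

variable {G : Type*} [Group G] (N : Subgroup G) [N.Normal]

instance iterComm.normal : ∀ m, (iterComm N m).Normal
  | 0 => Subgroup.normal_top
  | m + 1 => haveI := iterComm.normal m; Subgroup.commutator_normal _ _

theorem iterComm_antitone : Antitone (iterComm N) :=
  antitone_nat_of_succ_le fun _ => Subgroup.commutator_le_left _ _

theorem commutator_iterComm_gammaN_le_s5 (l : ℕ) :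
    ∀ a, ⁅iterComm N a, gammaN N l⁆ ≤ iterComm N (a + l + 1) := by
  induction l with
  | zero => exact fun _ => le_rfl
  | succ l ih =>
    intro a
    change ⁅iterComm N a, ⁅gammaN N l, N⁆⁆ ≤ _
    rw [Subgroup.commutator_comm]
    apply Subgroup.commutator_commutator_le_of_rotate_s5
    · rw [Subgroup.commutator_comm N]
      have := ih (a + 1)
      rwa [Nat.add_right_comm a 1 l] at this
    · exact Subgroup.commutator_mono (ih a) le_rfl

end

theorem commutator_iterComm_gammaN_card_le_general
    {G : Type*} [Group G] (N : Subgroup G) [N.Normal] {d : ℕ}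
    (A B : Finset (Fin d)) (hB : B.Nonempty) :
    ⁅iterComm N A.card, gammaN N (B.card - 1)⁆ ≤ iterComm N (A ∪ B).card := by
  have hcard : (A ∪ B).card ≤ A.card + (B.card - 1) + 1 := by
    have := Finset.card_union_le A B
    have := hB.card_pos
    omega
  exact (commutator_iterComm_gammaN_le_s5 N _ _).trans (iterComm_antitone N hcard)

/-- **Lemma (KL) (2).** For a normal subgroup `N ⊴ G` and `A, B ⊆ [d]` with `B ≠ ∅`:
`[[G, ^{|A|}N], γ_{|B|}(N)] ≤ [G, ^{|A ∪ B|}N]`. -/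
theorem commutator_iterComm_gammaN_card_le
    {G : Type*} [Group G] (N : Subgroup G) [N.Normal] {d : ℕ} (hd : 0 < d)
    (A B : Finset (Fin d)) (hB : B.Nonempty) :
    ⁅iterComm N A.card, gammaN N (B.card - 1)⁆ ≤ iterComm N (A ∪ B).card :=
  commutator_iterComm_gammaN_card_le_general N A B hB
end

section
/- Let $\mathbb{F}$ be the field with $4$ elements and let $T$ be the set of $2\times 2$ matrices over $\mathbb{F}$ with trace $0$. Then the $\mathbb{F}$-linear span of the set $U=\{-B+A^{-1}BA \mid B\in T,\ A\in \mathrm{SL}_2(\mathbb{F})\}$ equals $T$ (as an $\mathbb{F}$-submodule of the $2\times 2$ matrices). -/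
/-!
Conjugation by `diag(a⁻¹, a) ∈ SL₂` multiplies the off-diagonal elementary matrices by `a^{±2}`,
so each of them is `(a² - 1)⁻¹` times an element of `U` as soon as `a² ≠ 1`; a field with more
than three elements has such a nonzero `a`. Conjugating the lower elementary matrix by the shear
`[[1, 1], [0, 1]]` then yields `diag(1, -1)` up to the upper one, and these three matrices span
the trace-zero matrices.
-/

open Submodule

namespace Matrix

def traceZeroConjDiffs (n R : Type*) [Fintype n] [DecidableEq n] [CommRing R] :
    Set (Matrix n n R) :=
  {X | ∃ (B : Matrix n n R) (A : SpecialLinearGroup n R),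
    B.trace = 0 ∧ X = -B + (↑(A⁻¹) : Matrix n n R) * B * (↑A : Matrix n n R)}

section CommRing

variable {n R : Type*} [Fintype n] [DecidableEq n] [CommRing R]

theorem trace_neg_add_conj (A : SpecialLinearGroup n R) (B : Matrix n n R) :
    trace (-B + (↑(A⁻¹) : Matrix n n R) * B * (↑A : Matrix n n R)) = 0 := by
  rw [trace_add, trace_neg, trace_mul_cycle, ← SpecialLinearGroup.coe_mul, mul_inv_cancel,
    SpecialLinearGroup.coe_one, one_mul, neg_add_cancel]

theorem span_traceZeroConjDiffs_le_ker_trace :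
    span R (traceZeroConjDiffs n R) ≤ LinearMap.ker (traceLinearMap n R R) :=
  span_le.2 fun _ ⟨B, A, _, hX⟩ => hX ▸ trace_neg_add_conj A B

theorem neg_add_adjugate_mul_mem_span_traceZeroConjDiffs {M : Matrix n n R} (hM : M.det = 1)
    {B : Matrix n n R} (hB : B.trace = 0) :
    -B + adjugate M * B * M ∈ span R (traceZeroConjDiffs n R) :=
  subset_span ⟨B, ⟨M, hM⟩, hB, rfl⟩

end CommRing

section Field

variable {F : Type*} [Field F] {a : F}

theorem upper_mem_span_traceZeroConjDiffs (ha0 : a ≠ 0) (ha : a ^ 2 ≠ 1) :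
    !![0, 1; 0, 0] ∈ span F (traceZeroConjDiffs (Fin 2) F) := by
  have hmem := neg_add_adjugate_mul_mem_span_traceZeroConjDiffs
    (M := !![a⁻¹, 0; 0, a]) (B := !![0, 1; 0, 0]) (by simp [det_fin_two_of, ha0]) (by simp)
  rw [adjugate_fin_two_of] at hmem
  rw [← smul_mem_iff _ (sub_ne_zero.2 ha)]
  convert hmem using 1
  ext i j; fin_cases i <;> fin_cases j <;> simp [sq, neg_add_eq_sub]

theorem lower_mem_span_traceZeroConjDiffs (ha0 : a ≠ 0) (ha : a ^ 2 ≠ 1) :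
    !![0, 0; 1, 0] ∈ span F (traceZeroConjDiffs (Fin 2) F) := by
  have hmem := neg_add_adjugate_mul_mem_span_traceZeroConjDiffs
    (M := !![a, 0; 0, a⁻¹]) (B := !![0, 0; 1, 0]) (by simp [det_fin_two_of, ha0]) (by simp)
  rw [adjugate_fin_two_of] at hmem
  rw [← smul_mem_iff _ (sub_ne_zero.2 ha)]
  convert hmem using 1
  ext i j; fin_cases i <;> fin_cases j <;> simp [sq, neg_add_eq_sub]

theorem diagonal_mem_span_traceZeroConjDiffs (ha0 : a ≠ 0) (ha : a ^ 2 ≠ 1) :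
    !![1, 0; 0, -1] ∈ span F (traceZeroConjDiffs (Fin 2) F) := by
  have hmem := neg_add_adjugate_mul_mem_span_traceZeroConjDiffs
    (M := !![(1 : F), 1; 0, 1]) (B := !![0, 0; 1, 0]) (by simp [det_fin_two_of]) (by simp)
  rw [adjugate_fin_two_of] at hmem
  have hsum := neg_mem (add_mem hmem (upper_mem_span_traceZeroConjDiffs ha0 ha))
  convert hsum using 1
  ext i j; fin_cases i <;> fin_cases j <;> simp

theorem span_traceZeroConjDiffs_fin_two (ha0 : a ≠ 0) (ha : a ^ 2 ≠ 1) :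
    span F (traceZeroConjDiffs (Fin 2) F) = LinearMap.ker (traceLinearMap (Fin 2) F F) := by
  refine span_traceZeroConjDiffs_le_ker_trace.antisymm fun M hM => ?_
  have hM11 : M 1 1 = -M 0 0 := by
    rw [LinearMap.mem_ker, traceLinearMap_apply, trace_fin_two] at hM
    exact eq_neg_of_add_eq_zero_right hM
  have hdecomp :
      M = M 0 0 • !![1, 0; 0, -1] + M 0 1 • !![0, 1; 0, 0] + M 1 0 • !![0, 0; 1, 0] := by
    rw [eta_fin_two M, hM11]
    ext i j; fin_cases i <;> fin_cases j <;> simp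
  rw [hdecomp]
  exact add_mem (add_mem (smul_mem _ _ (diagonal_mem_span_traceZeroConjDiffs ha0 ha))
    (smul_mem _ _ (upper_mem_span_traceZeroConjDiffs ha0 ha)))
    (smul_mem _ _ (lower_mem_span_traceZeroConjDiffs ha0 ha))

end Field

end Matrix

theorem exists_ne_zero_sq_ne_one {F : Type*} [Field F] [Fintype F] (hF : 3 < Fintype.card F) :
    ∃ a : F, a ≠ 0 ∧ a ^ 2 ≠ 1 := by
  classical
  obtain ⟨a, -, ha⟩ := Finset.exists_mem_notMem_of_card_lt_card
    ((Finset.card_le_three (a := (0 : F)) (b := 1) (c := -1)).trans_lt hF)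
  simp only [Finset.mem_insert, Finset.mem_singleton, not_or] at ha
  exact ⟨a, ha.1, by simpa [sq_eq_one_iff] using ha.2⟩

/-- **Lemma A.** Over the field `𝔽₄` with 4 elements, the span of
`U = {-B + A⁻¹BA | B ∈ T, A ∈ SL₂(𝔽₄)}` is the submodule `T` of trace-zero
`2 × 2` matrices. -/
theorem span_conj_diff_eq_traceZero
    (F : Type*) [Field F] [Fintype F] (hF : Fintype.card F = 4) :
    Submodule.span F {X : Matrix (Fin 2) (Fin 2) F |
        ∃ (B : Matrix (Fin 2) (Fin 2) F) (A : Matrix.SpecialLinearGroup (Fin 2) F),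
          B.trace = 0 ∧
          X = -B + (↑(A⁻¹) : Matrix (Fin 2) (Fin 2) F) * B * (↑A : Matrix (Fin 2) (Fin 2) F)} =
      LinearMap.ker (Matrix.traceLinearMap (Fin 2) F F) := by
  obtain ⟨a, ha0, ha⟩ := exists_ne_zero_sq_ne_one (F := F) (by omega)
  exact Matrix.span_traceZeroConjDiffs_fin_two ha0 ha
end

section
/- With $\mathbb{F}=\mathbb{F}_4$ and $H$, $M$, $G=HM$ the subgroups of $\mathrm{SL}_6(\mathbb{F})$ defined below, $M$ is a normal subgroup of $G$ (equivalently, every element of $H$ normalizes $M$, so $HM$ is a subgroup of $\mathrm{SL}_6(\mathbb{F})$ containing $M$ as a normal subgroup). -/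
/-- The group `SL₆(F)`, with rows and columns indexed by `Fin 3 × Fin 2`, so that
its elements can be viewed as `3 × 3` block matrices with `2 × 2` blocks. -/
abbrev SL6 (F : Type*) [Field F] [Fintype F] : Type _ :=
  Matrix.SpecialLinearGroup (Fin 3 × Fin 2) F

/-- Assemble a `3 × 3` array of `2 × 2` blocks into a `6 × 6` matrix. -/
def blk3 {F : Type*} [Field F] (f : Fin 3 → Fin 3 → Matrix (Fin 2) (Fin 2) F) :
    Matrix (Fin 3 × Fin 2) (Fin 3 × Fin 2) F :=
  Matrix.of fun p q => f p.1 q.1 p.2 q.2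

/-- The subgroup `H` of `SL₆(F)`: block diagonal matrices `diag(A, A, A)` with
`A ∈ SL₂(F)`. -/
def Hset (F : Type*) [Field F] [Fintype F] : Set (SL6 F) :=
  {X | ∃ A : Matrix.SpecialLinearGroup (Fin 2) F,
    (X : Matrix (Fin 3 × Fin 2) (Fin 3 × Fin 2) F) =
      blk3 ![![(A : Matrix (Fin 2) (Fin 2) F), 0, 0],
              ![0, (A : Matrix (Fin 2) (Fin 2) F), 0],
              ![0, 0, (A : Matrix (Fin 2) (Fin 2) F)]]}

/-- The subgroup `M` of `SL₆(F)`: block upper unitriangular matrices with blocks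
`B` (position (1,2)), `C` (position (2,3)) of trace `0` and an arbitrary block `D`
(position (1,3)). -/
def Mset (F : Type*) [Field F] [Fintype F] : Set (SL6 F) :=
  {X | ∃ B C D : Matrix (Fin 2) (Fin 2) F, B.trace = 0 ∧ C.trace = 0 ∧
    (X : Matrix (Fin 3 × Fin 2) (Fin 3 × Fin 2) F) =
      blk3 ![![1, B, D], ![0, 1, C], ![0, 0, 1]]}

/-- The subgroup `N` of `SL₆(F)`: elements of `M` whose blocks in positions (1,2)
and (2,3) are scalar matrices `b•I` and `c•I`. -/
def Nset (F : Type*) [Field F] [Fintype F] : Set (SL6 F) :=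
  {X | ∃ (b c : F) (D : Matrix (Fin 2) (Fin 2) F),
    (X : Matrix (Fin 3 × Fin 2) (Fin 3 × Fin 2) F) =
      blk3 ![![1, b • 1, D], ![0, 1, c • 1], ![0, 0, 1]]}

/-- The group `G = HM`, i.e. the subgroup of `SL₆(F)` generated by `H ∪ M`. -/
def Gsub (F : Type*) [Field F] [Fintype F] : Subgroup (SL6 F) :=
  Subgroup.closure (Hset F ∪ Mset F)

/-! `blk3 f` is the image of the block matrix `of f` under `Matrix.compRingEquiv`, so block
computations take place in the ring of `3 × 3` matrices over `R = Mat₂(F)`. There `M` consists of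
the Heisenberg matrices `!![1, B, D; 0, 1, C; 0, 0, 1]` with `tr B = tr C = 0`, and `diag(A, A, A)`
is the scalar matrix `A`. Heisenberg matrices over any ring are closed under products
(`B + B'`, `C + C'`, `D + B C' + D'`) and inverses, and conjugating one by a scalar unit `A`
conjugates each entry by `A`, which preserves traces. So both `H` and `M` normalize `M`, hence so
does the group they generate. -/

open Matrix

section Heisenberg

variable {R : Type*} [Ring R]

def heisenberg (B C D : R) : Matrix (Fin 3) (Fin 3) R :=
  !![1, B, D; 0, 1, C; 0, 0, 1]

theorem heisenberg_zero : heisenberg (0 : R) 0 0 = 1 := by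
  rw [heisenberg, one_fin_three]

theorem heisenberg_mul_heisenberg (B C D B' C' D' : R) :
    heisenberg B C D * heisenberg B' C' D' =
      heisenberg (B + B') (C + C') (D + B * C' + D') := by
  ext i j
  fin_cases i <;> fin_cases j <;> simp [heisenberg] <;> abel

theorem heisenberg_mul_heisenberg_neg (B C D : R) :
    heisenberg B C D * heisenberg (-B) (-C) (B * C - D) = 1 := by
  rw [heisenberg_mul_heisenberg, mul_neg, ← heisenberg_zero]
  congr 1 <;> abel

theorem scalar_mul_heisenberg_mul_scalar {u v : R} (huv : u * v = 1) (B C D : R) :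
    scalar (Fin 3) u * heisenberg B C D * scalar (Fin 3) v =
      heisenberg (u * B * v) (u * C * v) (u * D * v) := by
  simp only [scalar_apply, diagonal_fin_three, heisenberg, mul_fin_three]
  congr <;> simp [huv]

end Heisenberg

theorem Matrix.SpecialLinearGroup.coe_inv_eq_of_mul_eq_one {n R : Type*} [DecidableEq n]
    [Fintype n] [CommRing R] {x : Matrix.SpecialLinearGroup n R} {Y : Matrix n n R}
    (h : (x : Matrix n n R) * Y = 1) :
    ((x⁻¹ : Matrix.SpecialLinearGroup n R) : Matrix n n R) = Y :=
  left_inv_eq_right_inv (congrArg Subtype.val (inv_mul_cancel x)) h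

section Blocks

variable {F : Type*} [Field F] [Fintype F]

theorem mem_Mset_iff {X : SL6 F} :
    X ∈ Mset F ↔ ∃ B C D : Matrix (Fin 2) (Fin 2) F, B.trace = 0 ∧ C.trace = 0 ∧
      (X : Matrix (Fin 3 × Fin 2) (Fin 3 × Fin 2) F) =
        compRingEquiv (Fin 3) (Fin 2) F (heisenberg B C D) :=
  Iff.rfl

theorem mem_Hset_iff {X : SL6 F} :
    X ∈ Hset F ↔ ∃ A : Matrix.SpecialLinearGroup (Fin 2) F,
      (X : Matrix (Fin 3 × Fin 2) (Fin 3 × Fin 2) F) =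
        compRingEquiv (Fin 3) (Fin 2) F (scalar (Fin 3) (A : Matrix (Fin 2) (Fin 2) F)) := by
  simp only [scalar_apply, diagonal_fin_three]
  rfl

variable (F) in
def Msub : Subgroup (SL6 F) where
  carrier := Mset F
  one_mem' := mem_Mset_iff.2 ⟨0, 0, 0, trace_zero .., trace_zero .., by
    rw [heisenberg_zero, map_one]; rfl⟩
  mul_mem' := by
    simp only [mem_Mset_iff]
    rintro x y ⟨B, C, D, hB, hC, hx⟩ ⟨B', C', D', hB', hC', hy⟩
    refine ⟨B + B', C + C', D + B * C' + D', by simp [hB, hB'], by simp [hC, hC'], ?_⟩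
    rw [Matrix.SpecialLinearGroup.coe_mul, hx, hy, ← map_mul, heisenberg_mul_heisenberg]
  inv_mem' := by
    simp only [mem_Mset_iff]
    rintro x ⟨B, C, D, hB, hC, hx⟩
    refine ⟨-B, -C, B * C - D, by simp [hB], by simp [hC], ?_⟩
    refine Matrix.SpecialLinearGroup.coe_inv_eq_of_mul_eq_one ?_
    rw [hx, ← map_mul, heisenberg_mul_heisenberg_neg, map_one]

theorem coe_inv_of_coe_eq_scalar {g : SL6 F} {A : Matrix.SpecialLinearGroup (Fin 2) F}
    (hA : (g : Matrix (Fin 3 × Fin 2) (Fin 3 × Fin 2) F) =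
      compRingEquiv (Fin 3) (Fin 2) F (scalar (Fin 3) (A : Matrix (Fin 2) (Fin 2) F))) :
    ((g⁻¹ : SL6 F) : Matrix (Fin 3 × Fin 2) (Fin 3 × Fin 2) F) =
      compRingEquiv (Fin 3) (Fin 2) F
        (scalar (Fin 3)
          ((A⁻¹ : Matrix.SpecialLinearGroup (Fin 2) F) : Matrix (Fin 2) (Fin 2) F)) := by
  refine Matrix.SpecialLinearGroup.coe_inv_eq_of_mul_eq_one ?_
  rw [hA, ← map_mul, ← map_mul, ← Matrix.SpecialLinearGroup.coe_mul, mul_inv_cancel,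
    Matrix.SpecialLinearGroup.coe_one, map_one, map_one]

theorem inv_mem_Hset {g : SL6 F} (hg : g ∈ Hset F) : g⁻¹ ∈ Hset F := by
  obtain ⟨A, hA⟩ := mem_Hset_iff.1 hg
  exact mem_Hset_iff.2 ⟨A⁻¹, coe_inv_of_coe_eq_scalar hA⟩

theorem conj_mem_Mset_of_mem_Hset {g m : SL6 F} (hg : g ∈ Hset F) (hm : m ∈ Mset F) :
    g * m * g⁻¹ ∈ Mset F := by
  obtain ⟨A, hA⟩ := mem_Hset_iff.1 hg
  obtain ⟨B, C, D, hB, hC, hm⟩ := mem_Mset_iff.1 hm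
  set a : Matrix (Fin 2) (Fin 2) F := ↑A
  set a' : Matrix (Fin 2) (Fin 2) F := ↑A⁻¹
  have haa' : a * a' = 1 := by
    rw [← Matrix.SpecialLinearGroup.coe_mul, mul_inv_cancel, Matrix.SpecialLinearGroup.coe_one]
  have ha'a : a' * a = 1 := by
    rw [← Matrix.SpecialLinearGroup.coe_mul, inv_mul_cancel, Matrix.SpecialLinearGroup.coe_one]
  refine mem_Mset_iff.2 ⟨a * B * a', a * C * a', a * D * a', ?_, ?_, ?_⟩
  · rw [trace_mul_cycle, ha'a, one_mul, hB]
  · rw [trace_mul_cycle, ha'a, one_mul, hC]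
  · rw [Matrix.SpecialLinearGroup.coe_mul, Matrix.SpecialLinearGroup.coe_mul, hA, hm,
      coe_inv_of_coe_eq_scalar hA, ← map_mul, ← map_mul, scalar_mul_heisenberg_mul_scalar haa']

theorem Hset_subset_normalizer_Mset : Hset F ⊆ Subgroup.normalizer (Mset F) := fun _ hg m => by
  refine ⟨conj_mem_Mset_of_mem_Hset hg, fun hm => ?_⟩
  simpa [mul_assoc] using conj_mem_Mset_of_mem_Hset (inv_mem_Hset hg) hm

theorem Gsub_le_normalizer_Mset : Gsub F ≤ Subgroup.normalizer (Mset F) :=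
  (Subgroup.closure_le _).2 <|
    Set.union_subset Hset_subset_normalizer_Mset (Subgroup.le_normalizer (H := Msub F))

end Blocks

theorem Mset_normal_in_Gsub_general
    (F : Type*) [Field F] [Fintype F] :
    ((Subgroup.closure (Mset F) : Set (SL6 F)) = Mset F) ∧
    ∀ g ∈ Gsub F, ∀ m ∈ Mset F, g * m * g⁻¹ ∈ Mset F :=
  ⟨congrArg SetLike.coe (Subgroup.closure_eq (Msub F)),
    fun _ hg m hm => (Subgroup.mem_set_normalizer_iff.1 (Gsub_le_normalizer_Mset hg) m).1 hm⟩

/-- **Lemma SL6 (1).** `M` is a normal subgroup of `G`: the set `M` is a subgroup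
(it coincides with the subgroup it generates) and it is normalized by every
element of `G`. -/
theorem Mset_normal_in_Gsub
    (F : Type*) [Field F] [Fintype F] (hF : Fintype.card F = 4) :
    ((Subgroup.closure (Mset F) : Set (SL6 F)) = Mset F) ∧
    ∀ g ∈ Gsub F, ∀ m ∈ Mset F, g * m * g⁻¹ ∈ Mset F :=
  Mset_normal_in_Gsub_general F
end
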